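/- Suppose p, q are nonzero coprime integers with 7q² + 59p² = 3^ω for some ω > 0 and pq ≡ −1 (mod 3). Let x = |A(p,q)|/3⁵ and y = |B(p,q)|/3⁵. Then x and y are coprime positive integers satisfying 7x² + 59y² = 3^(2ω−5). -/

import Mathlib

def A (p q : ℤ) : ℤ := 59*p^2 - 236*p*q - 7*q^2
def B (p q : ℤ) : ℤ := -118*p^2 - 14*p*q + 14*q^2

/-!
Since `243 = 7 * 1 ^ 2 + 59 * 2 ^ 2`, composing this representation of `3⁵` with the square of
`7 q² + 59 p²` gives the pair `(A, B)`, so `7 A² + 59 B² = 3⁵ (7 q² + 59 p²)²`.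
As `3 ∤ pq`, we have `7 q² + 59 p² ≥ 66`, and `81 - 59 = 22` is not `7` times a square, so
`ω ≥ 5`; writing `7 q² + 59 p² = 59 (p - 2q)(p + 2q) + 3⁵ q²` with `3 ∤ p + 2q` gives
`p ≡ 2q (mod 3⁵)`, whence `3⁵ ∣ A, B`.
Then `7 x² + 59 y²` is a power of `3`, so a common factor of `x` and `y` would be divisible
by `3`, which `2A + B = -2 · 3⁵ · pq` rules out.
-/

section Arithmetic

variable {p q : ℤ}

lemma not_three_dvd_mul_of_mul_modEq_neg_one (h : p * q ≡ -1 [ZMOD 3]) : ¬ 3 ∣ p * q := by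
  have := h.dvd
  omega

lemma not_three_dvd_add_two_mul_of_mul_modEq_neg_one (h : p * q ≡ -1 [ZMOD 3]) :
    ¬ 3 ∣ p + 2 * q := by
  have key : ∀ P Q : ZMod 3, P * Q = -1 → P + 2 * Q ≠ 0 := by decide
  have h3 := (ZMod.intCast_eq_intCast_iff _ _ 3).mpr h
  intro hdvd
  have h0 := (ZMod.intCast_zmod_eq_zero_iff_dvd (p + 2 * q) 3).mpr hdvd
  push_cast at h3 h0
  exact key _ _ h3 h0

lemma five_le_of_seven_mul_sq_add_eq_three_pow {ω : ℕ} (hp : p ≠ 0) (hq : q ≠ 0)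
    (h : 7 * q ^ 2 + 59 * p ^ 2 = 3 ^ ω) : 5 ≤ ω := by
  have hp2 : 0 < p ^ 2 := by positivity
  have hq2 : 0 < q ^ 2 := by positivity
  generalize p ^ 2 = P at *
  generalize q ^ 2 = Q at *
  by_contra! hω
  interval_cases ω <;> omega

lemma three_pow_five_dvd_sub_two_mul (hS : 3 ^ 5 ∣ 7 * q ^ 2 + 59 * p ^ 2)
    (hs : ¬ 3 ∣ p + 2 * q) : 3 ^ 5 ∣ p - 2 * q := by
  have hprod : (3 : ℤ) ^ 5 ∣ 59 * ((p - 2 * q) * (p + 2 * q)) := by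
    have e : 59 * ((p - 2 * q) * (p + 2 * q)) = (7 * q ^ 2 + 59 * p ^ 2) - 3 ^ 5 * q ^ 2 := by
      ring
    exact e ▸ dvd_sub hS (dvd_mul_right _ _)
  have h59 : IsCoprime ((3 : ℤ) ^ 5) 59 := by norm_num [Int.isCoprime_iff_gcd_eq_one]
  have hsum : IsCoprime ((3 : ℤ) ^ 5) (p + 2 * q) :=
    (Int.prime_three.coprime_iff_not_dvd.mpr hs).pow_left
  exact hsum.dvd_of_dvd_mul_right (h59.dvd_of_dvd_mul_left hprod)

end Arithmetic

lemma ne_zero_of_seven_mul_sq_add_eq_three_pow {a b : ℤ} {k : ℕ}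
    (h : 7 * a ^ 2 + 59 * b ^ 2 = 3 ^ k) : a ≠ 0 ∧ b ≠ 0 := by
  have not_dvd : ∀ r : ℕ, r.Prime → r ≠ 3 → ¬ (r : ℤ) ∣ 3 ^ k := fun r hr hr3 hdvd =>
    hr3 ((Nat.prime_dvd_prime_iff_eq hr Nat.prime_three).mp
      (hr.dvd_of_dvd_pow (Int.natCast_dvd_natCast.mp (by exact_mod_cast hdvd))))
  constructor
  · rintro rfl
    exact not_dvd 59 (by norm_num) (by norm_num) ⟨b ^ 2, by rw [← h]; ring⟩
  · rintro rfl
    exact not_dvd 7 (by norm_num) (by norm_num) ⟨a ^ 2, by rw [← h]; ring⟩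

lemma Int.gcd_eq_one_of_mul_sq_add_mul_sq_eq_prime_pow {a b c d : ℤ} {r k : ℕ} (hr : r.Prime)
    (h : c * a ^ 2 + d * b ^ 2 = r ^ k) (hab : ¬ ((r : ℤ) ∣ a ∧ (r : ℤ) ∣ b)) :
    Int.gcd a b = 1 := by
  have hga := Int.gcd_dvd_left a b
  have hgb := Int.gcd_dvd_right a b
  have hdvd : Int.gcd a b ∣ r ^ k := by
    have : (Int.gcd a b : ℤ) ∣ r ^ k :=
      h ▸ dvd_add ((dvd_pow hga two_ne_zero).mul_left c)
        ((dvd_pow hgb two_ne_zero).mul_left d)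
    exact_mod_cast this
  have hcop : Nat.Coprime (Int.gcd a b) r := by
    refine Nat.coprime_comm.mp ((Nat.Prime.coprime_iff_not_dvd hr).mpr fun hrg => hab ?_)
    have hrg' : (r : ℤ) ∣ Int.gcd a b := Int.natCast_dvd_natCast.mpr hrg
    exact ⟨hrg'.trans hga, hrg'.trans hgb⟩
  exact (hcop.pow_right k).eq_one_of_dvd hdvd

section Successor

variable (p q : ℤ)

lemma seven_mul_A_sq_add_fiftynine_mul_B_sq :
    7 * A p q ^ 2 + 59 * B p q ^ 2 = 3 ^ 5 * (7 * q ^ 2 + 59 * p ^ 2) ^ 2 := by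
  unfold A B; ring

lemma two_mul_A_add_B : 2 * A p q + B p q = -(2 * 3 ^ 5) * (p * q) := by
  unfold A B; ring

variable {p q}

lemma three_pow_five_dvd_A (hS : 3 ^ 5 ∣ 7 * q ^ 2 + 59 * p ^ 2) (hD : 3 ^ 5 ∣ p - 2 * q) :
    3 ^ 5 ∣ A p q := by
  obtain ⟨s, hs⟩ := hS
  obtain ⟨t, ht⟩ := hD
  exact ⟨s - 236 * q * t - 2 * q ^ 2, by unfold A; linear_combination hs - 236 * q * ht⟩

lemma three_pow_five_dvd_B (hS : 3 ^ 5 ∣ 7 * q ^ 2 + 59 * p ^ 2) (hD : 3 ^ 5 ∣ p - 2 * q) :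
    3 ^ 5 ∣ B p q := by
  obtain ⟨s, hs⟩ := hS
  obtain ⟨t, ht⟩ := hD
  exact ⟨-2 * s - 14 * q * t, by unfold B; linear_combination -2 * hs - 14 * q * ht⟩

end Successor

lemma abs_three_pow_five_mul_ediv (a : ℤ) : |3 ^ 5 * a| / 3 ^ 5 = |a| := by
  rw [abs_mul, abs_of_pos (by norm_num), Int.mul_ediv_cancel_left _ (by norm_num)]

theorem stmt5_general (p q : ℤ)
    (ω : ℕ) (h : 7*q^2 + 59*p^2 = 3^ω)
    (hmod : p * q ≡ -1 [ZMOD 3])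
    (x y : ℤ) (hx : x = |A p q| / 3^5) (hy : y = |B p q| / 3^5) :
    0 < x ∧ 0 < y ∧ Int.gcd x y = 1 ∧ 7*x^2 + 59*y^2 = 3^(2*ω - 5) := by
  have hpq := not_three_dvd_mul_of_mul_modEq_neg_one hmod
  have hpq0 : p * q ≠ 0 := fun h0 => hpq (h0 ▸ dvd_zero 3)
  have hω := five_le_of_seven_mul_sq_add_eq_three_pow
    (left_ne_zero_of_mul hpq0) (right_ne_zero_of_mul hpq0) h
  obtain ⟨k, rfl⟩ : ∃ k, ω = k + 5 := ⟨ω - 5, by omega⟩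
  have hS : (3 : ℤ) ^ 5 ∣ 7 * q ^ 2 + 59 * p ^ 2 := h ▸ pow_dvd_pow 3 (by omega)
  have hD := three_pow_five_dvd_sub_two_mul hS
    (not_three_dvd_add_two_mul_of_mul_modEq_neg_one hmod)
  obtain ⟨a, ha⟩ := three_pow_five_dvd_A hS hD
  obtain ⟨b, hb⟩ := three_pow_five_dvd_B hS hD
  rw [ha, abs_three_pow_five_mul_ediv] at hx
  rw [hb, abs_three_pow_five_mul_ediv] at hy
  subst hx hy
  have hnorm : 7 * |a| ^ 2 + 59 * |b| ^ 2 = 3 ^ (2 * (k + 5) - 5) := by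
    have e := seven_mul_A_sq_add_fiftynine_mul_B_sq p q
    rw [ha, hb, h] at e
    rw [sq_abs, sq_abs, show 2 * (k + 5) - 5 = 2 * k + 5 by omega]
    refine mul_left_cancel₀ (pow_ne_zero 10 three_ne_zero) ?_
    linear_combination e
  have hsum : 2 * a + b = -2 * (p * q) := by
    have e := two_mul_A_add_B p q
    rw [ha, hb] at e
    linarith
  obtain ⟨ha0, hb0⟩ := ne_zero_of_seven_mul_sq_add_eq_three_pow hnorm
  refine ⟨(abs_nonneg a).lt_of_ne' ha0, (abs_nonneg b).lt_of_ne' hb0,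
    Int.gcd_eq_one_of_mul_sq_add_mul_sq_eq_prime_pow Nat.prime_three hnorm ?_, hnorm⟩
  rintro ⟨h3a, h3b⟩
  rw [Nat.cast_ofNat, dvd_abs] at h3a h3b
  omega

theorem stmt5 (p q : ℤ) (hp : p ≠ 0) (hq : q ≠ 0) (hcop : Int.gcd p q = 1)
    (ω : ℕ) (hω : 0 < ω) (h : 7*q^2 + 59*p^2 = 3^ω)
    (hmod : p * q ≡ -1 [ZMOD 3])
    (x y : ℤ) (hx : x = |A p q| / 3^5) (hy : y = |B p q| / 3^5) :
    0 < x ∧ 0 < y ∧ Int.gcd x y = 1 ∧ 7*x^2 + 59*y^2 = 3^(2*ω - 5) :=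
  stmt5_general p q ω h hmod x y hx hy
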